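/- For Lyndon words s and r of length at least 2 over {0,1}, Φ_s(r^∞) = (s • r)^∞ and Φ_s(L(r)^∞) = (s • L(r))^∞; that is, the substitution Φ_s maps the periodic sequence with period block r to the periodic sequence with period block s • r, and similarly for L(r). -/

import Mathlib

/-! The `j`-th block of `Φ_s(x)` depends only on `x (j - 1)` and `x j`, where `x (-1)` is read as
`!x 0`. For `x = w^∞` the blocks are therefore `|w|`-periodic as soon as the last letter of `w` is
the flip of its first one, and the first `|w|` blocks spell `s • w`. A Lyndon word of length at
least 2 starts with `0` and ends with `1`; its maximal rotation starts with `1` and ends with `0`,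
since `L(r) = b1` would give the rotation `1b ≤ b1`, forcing `b = 1⋯1`. -/

/-- The cyclic rotation of a binary word `c` by `i`: `c_{i+1}…c_m c_1…c_i`. -/
def rot (c : List Bool) (i : ℕ) : List Bool := c.drop i ++ c.take i

/-- The lexicographically largest cyclic rotation `L(s)` of `s`. -/
def maxRot (s : List Bool) : List Bool :=
  (List.range s.length).foldl (fun acc i => max acc (rot s i)) s

/-- The lexicographically smallest cyclic rotation `S(s)` of `s`. -/
def minRot (s : List Bool) : List Bool :=
  (List.range s.length).foldl (fun acc i => min acc (rot s i)) s

/-- A binary word is Lyndon if every proper suffix is strictly lexicographically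
greater than the prefix of the same length. -/
def IsLyndon (s : List Bool) : Prop :=
  ∀ i, 0 < i → i < s.length → s.take (s.length - i) < s.drop i

/-- Left shift on sequences. -/
def shift (x : ℕ → Bool) (n : ℕ) : ℕ → Bool := fun i => x (n + i)

/-- Strict lexicographic order on `{0,1}^ℕ`. -/
def seqLt (x y : ℕ → Bool) : Prop := ∃ n, (∀ i, i < n → x i = y i) ∧ x n < y n

/-- Lexicographic order on `{0,1}^ℕ`. -/
def seqLe (x y : ℕ → Bool) : Prop := seqLt x y ∨ x = y

/-- The periodic sequence `w^∞` with period block `w`. -/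
def perSeq (w : List Bool) : ℕ → Bool := fun n => w.getD (n % w.length) false

/-- The sequence starting with the word `w` followed by the sequence `x`. -/
def app (w : List Bool) (x : ℕ → Bool) : ℕ → Bool := fun n => w.getD n (x (n - w.length))

/-- The block emitted by the substitution `Φ_s` (with `a = L(s)`) for a pair of
consecutive digits: `00 ↦ a`, `01 ↦ a⁺`, `10 ↦ s⁻`, `11 ↦ s`. -/
def blk (s a : List Bool) : Bool → Bool → List Bool
  | false, false => a
  | false, true  => a.dropLast ++ [true]
  | true,  false => s.dropLast ++ [false]
  | true,  true  => s

/-- The substitution `Φ_s` on infinite sequences: the first block is `s⁻` if `r 0 = 0`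
and `L(s)⁺` if `r 0 = 1`; block `j+1` is determined by the pair `(r j, r (j+1))`. -/
def subst (s : List Bool) (r : ℕ → Bool) : ℕ → Bool := fun n =>
  let m := s.length
  let j := n / m
  (if j = 0 then blk s (maxRot s) (!(r 0)) (r 0)
   else blk s (maxRot s) (r (j - 1)) (r j)).getD (n % m) false

/-- The substitution `s • r` on finite words. -/
def substWord (s : List Bool) (r : List Bool) : List Bool :=
  match r with
  | [] => []
  | c :: _ =>
      blk s (maxRot s) (!c) c ++
        ((r.zip r.tail).map fun p => blk s (maxRot s) p.1 p.2).flatten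

lemma le_foldl_max {α β : Type*} [LinearOrder β] (f : α → β) :
    ∀ (l : List α) (b : β), b ≤ l.foldl (fun acc i => max acc (f i)) b
  | [], _ => le_rfl
  | x :: l, b => (le_max_left b (f x)).trans (le_foldl_max f l _)

lemma le_foldl_max_of_mem {α β : Type*} [LinearOrder β] (f : α → β) :
    ∀ (l : List α) (b : β) {x : α}, x ∈ l → f x ≤ l.foldl (fun acc i => max acc (f i)) b
  | y :: l, b, x, hx => by
    rcases List.mem_cons.1 hx with rfl | hx
    · exact (le_max_right b (f x)).trans (le_foldl_max f l _)
    · exact le_foldl_max_of_mem f l _ hx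

lemma foldl_max_eq_or_exists {α β : Type*} [LinearOrder β] (f : α → β) :
    ∀ (l : List α) (b : β),
      l.foldl (fun acc i => max acc (f i)) b = b ∨
        ∃ x ∈ l, l.foldl (fun acc i => max acc (f i)) b = f x
  | [], _ => Or.inl rfl
  | x :: l, b => by
    rcases foldl_max_eq_or_exists f l (max b (f x)) with h | ⟨y, hy, h⟩
    · rcases max_cases b (f x) with ⟨hb, _⟩ | ⟨hb, _⟩
      · exact Or.inl (by simpa [hb] using h)
      · exact Or.inr ⟨x, List.mem_cons_self, by simpa [hb] using h⟩
    · exact Or.inr ⟨y, List.mem_cons_of_mem _ hy, h⟩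

lemma rot_eq_rotate {c : List Bool} {i : ℕ} (h : i ≤ c.length) : rot c i = c.rotate i :=
  (List.rotate_eq_drop_append_take h).symm

lemma exists_maxRot_eq_rotate (s : List Bool) : ∃ i, maxRot s = s.rotate i := by
  rcases foldl_max_eq_or_exists (rot s) (List.range s.length) s with h | ⟨i, hi, h⟩
  · exact ⟨0, by rw [maxRot, h, List.rotate_zero]⟩
  · exact ⟨i, by rw [maxRot, h, rot_eq_rotate (List.mem_range.1 hi).le]⟩

lemma length_maxRot (s : List Bool) : (maxRot s).length = s.length := by
  obtain ⟨i, hi⟩ := exists_maxRot_eq_rotate s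
  rw [hi, List.length_rotate]

lemma rotate_le_maxRot (s : List Bool) (i : ℕ) : s.rotate i ≤ maxRot s := by
  rcases eq_or_ne s [] with rfl | hs
  · exact (List.rotate_nil i).le
  have hi : i % s.length < s.length := Nat.mod_lt _ (List.length_pos_iff.2 hs)
  rw [← List.rotate_mod, ← rot_eq_rotate hi.le]
  exact le_foldl_max_of_mem (rot s) _ s (List.mem_range.2 hi)

lemma eq_true_of_mem_of_true_cons_le_concat :
    ∀ {b : List Bool}, (true :: b) ≤ b ++ [true] → ∀ x ∈ b, x = true
  | [], _ => by simp
  | x :: b, h => by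
    cases x
    · exact absurd h (not_le_of_gt (List.Lex.rel (by decide)))
    · simpa using eq_true_of_mem_of_true_cons_le_concat
        (not_lt.1 fun hlt => not_lt.2 h (List.cons_lt_cons_self.2 hlt))

lemma maxRot_getD_zero {w : List Bool} (h : true ∈ w) : (maxRot w).getD 0 false = true := by
  obtain ⟨a, b, rfl⟩ := List.append_of_mem h
  have hle := rotate_le_maxRot (a ++ true :: b) a.length
  rw [List.rotate_append_length_eq] at hle
  rcases hM : maxRot (a ++ true :: b) with _ | ⟨_ | _, M⟩
  · rw [hM] at hle
    exact absurd hle (not_le_of_gt (List.nil_lt_cons _ _))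
  · rw [hM] at hle
    exact absurd hle (not_le_of_gt (List.Lex.rel (by decide)))
  · rfl

lemma maxRot_getD_last {w : List Bool} (h : false ∈ w) :
    (maxRot w).getD ((maxRot w).length - 1) false = false := by
  rcases (maxRot w).eq_nil_or_concat' with hM | ⟨b, c, hM⟩
  · simp [hM]
  rw [hM, List.getD_append_right _ _ _ _ (by simp)]
  cases c
  · simp
  obtain ⟨i, hi⟩ := exists_maxRot_eq_rotate w
  have hle : (true :: b) ≤ b ++ [true] := by
    have := rotate_le_maxRot w (i + b.length)
    rwa [← List.rotate_rotate, ← hi, hM, List.rotate_append_length_eq] at this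
  have hall : ∀ x ∈ maxRot w, x = true := by
    simpa [hM] using eq_true_of_mem_of_true_cons_le_concat hle
  rw [hi] at hall
  exact absurd (hall false (List.mem_rotate.2 h)) Bool.false_ne_true

lemma IsLyndon.getD_zero_and_last {r : List Bool} (hL : IsLyndon r) (hr : 2 ≤ r.length) :
    r.getD 0 false = false ∧ r.getD (r.length - 1) false = true := by
  have h := hL (r.length - 1) (by omega) (by omega)
  obtain ⟨a, t, rfl⟩ := List.exists_cons_of_length_pos (by omega : 0 < r.length)
  rw [List.drop_length_sub_one (List.cons_ne_nil a t), show (a :: t).length - ((a :: t).length - 1) = 1 by omega,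
    List.take_one, List.head?_cons, Option.toList_some, List.cons_lt_cons_iff] at h
  simp only [List.lt_irrefl, and_false, or_false, Bool.lt_iff] at h
  simpa [List.getD_eq_getElem _ _ (by omega : (a :: t).length - 1 < (a :: t).length),
    List.getLast_eq_getElem] using h

def substBlock (s : List Bool) (r : ℕ → Bool) (j : ℕ) : List Bool :=
  if j = 0 then blk s (maxRot s) (!(r 0)) (r 0) else blk s (maxRot s) (r (j - 1)) (r j)

lemma subst_apply (s : List Bool) (r : ℕ → Bool) (n : ℕ) :
    subst s r n = (substBlock s r (n / s.length)).getD (n % s.length) false := rfl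

lemma length_blk {s : List Bool} (hs : 0 < s.length) (x y : Bool) :
    (blk s (maxRot s) x y).length = s.length := by
  have := length_maxRot s
  cases x <;> cases y <;> simp [blk, this] <;> omega

lemma length_substBlock {s : List Bool} (hs : 0 < s.length) (r : ℕ → Bool) (j : ℕ) :
    (substBlock s r j).length = s.length := by
  unfold substBlock
  split <;> exact length_blk hs _ _

lemma perSeq_periodic (w : List Bool) : Function.Periodic (perSeq w) w.length := by
  intro n
  simp [perSeq]

lemma perSeq_eq_getElem {w : List Bool} {n : ℕ} (h : n < w.length) : perSeq w n = w[n] := by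
  rw [perSeq, Nat.mod_eq_of_lt h, List.getD_eq_getElem]

lemma substWord_eq_flatten (s w : List Bool) :
    substWord s w = ((List.range w.length).map (substBlock s (perSeq w))).flatten := by
  rcases w with _ | ⟨c, t⟩
  · rfl
  simp only [substWord, List.length_cons, List.range_succ_eq_map, List.map_cons, List.map_map,
    List.flatten_cons, List.tail_cons]
  congr 2
  refine List.ext_getElem (by simp) fun q h₁ h₂ => ?_
  simp only [List.length_map, List.length_range] at h₂
  simp [substBlock, perSeq_eq_getElem (by simp; omega : q < (c :: t).length),
    perSeq_eq_getElem (by simpa using h₂ : q + 1 < (c :: t).length)]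

lemma length_flatten_map_range {α : Type*} {f : ℕ → List α} {m : ℕ}
    (hf : ∀ q, (f q).length = m) (k : ℕ) : ((List.range k).map f).flatten.length = k * m := by
  simp [List.length_flatten, Function.comp_def, hf]

lemma getD_flatten_map_range {α : Type*} {f : ℕ → List α} {m : ℕ}
    (hf : ∀ q, (f q).length = m) (d : α) {k n : ℕ} (hn : n < k * m) :
    ((List.range k).map f).flatten.getD n d = (f (n / m)).getD (n % m) d := by
  induction k with
  | zero => simp at hn
  | succ k ih =>
    rw [List.range_succ, List.map_append, List.flatten_append, List.map_singleton,
      List.flatten_singleton]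
    by_cases hnk : n < k * m
    · rw [List.getD_append _ _ _ _ (by rwa [length_flatten_map_range hf]), ih hnk]
    · have hdiv : n / m = k := Nat.div_eq_of_lt_le (by omega) hn
      rw [List.getD_append_right _ _ _ _ (by rw [length_flatten_map_range hf]; omega),
        length_flatten_map_range hf, hdiv, Nat.mod_eq_sub_mul_div, hdiv, mul_comm]

lemma length_pos_of_getD_last_eq_not {w : List Bool}
    (hw : w.getD (w.length - 1) false = !w.getD 0 false) : 0 < w.length := by
  rcases w with _ | _
  · simp at hw
  · simp

lemma substBlock_perSeq_periodic {s w : List Bool}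
    (hw : w.getD (w.length - 1) false = !w.getD 0 false) :
    Function.Periodic (substBlock s (perSeq w)) w.length := by
  have hk := length_pos_of_getD_last_eq_not hw
  intro j
  cases j with
  | zero =>
    have hlast : perSeq w (w.length - 1) = !perSeq w 0 := by
      simpa [perSeq, Nat.mod_eq_of_lt (by omega : w.length - 1 < w.length)] using hw
    have hfirst : perSeq w w.length = perSeq w 0 := by simpa using perSeq_periodic w 0
    rw [zero_add, substBlock, substBlock, if_neg hk.ne', if_pos rfl, hlast, hfirst]
  | succ j =>
    rw [substBlock, substBlock, if_neg (by omega), if_neg (by omega), Nat.add_sub_cancel,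
      show j + 1 + w.length - 1 = j + w.length by omega, perSeq_periodic w j,
      perSeq_periodic w (j + 1)]

theorem subst_perSeq {s w : List Bool} (hs : 0 < s.length)
    (hw : w.getD (w.length - 1) false = !w.getD 0 false) :
    subst s (perSeq w) = perSeq (substWord s w) := by
  have hk := length_pos_of_getD_last_eq_not hw
  have hblk := length_substBlock hs (perSeq w)
  funext n
  have hn : n % (w.length * s.length) < w.length * s.length := Nat.mod_lt _ (by positivity)
  rw [subst_apply, perSeq, substWord_eq_flatten, length_flatten_map_range hblk,
    getD_flatten_map_range hblk _ hn, Nat.mod_mul_left_div_self, Nat.mod_mul_left_mod,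
    (substBlock_perSeq_periodic hw).map_mod_nat]

theorem stmt11_general (s r : List Bool) (hs : 2 ≤ s.length) (hr : 2 ≤ r.length)
    (hLr : IsLyndon r) :
    subst s (perSeq r) = perSeq (substWord s r) ∧
    subst s (perSeq (maxRot r)) = perSeq (substWord s (maxRot r)) := by
  obtain ⟨hfirst, hlast⟩ := hLr.getD_zero_and_last hr
  have hmem : ∀ i < r.length, r.getD i false ∈ r := fun i hi => by
    rw [List.getD_eq_getElem _ _ hi]
    exact List.getElem_mem hi
  refine ⟨subst_perSeq (by omega) (by rw [hfirst, hlast]; rfl), subst_perSeq (by omega) ?_⟩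
  rw [maxRot_getD_last (hfirst ▸ hmem 0 (by omega)),
    maxRot_getD_zero (hlast ▸ hmem _ (by omega))]
  rfl

/-- For Lyndon words `s, r` of length at least 2, the substitution `Φ_s` sends the
periodic sequence `r^∞` to `(s • r)^∞`, and `L(r)^∞` to `(s • L(r))^∞`. -/
theorem stmt11 (s r : List Bool) (hs : 2 ≤ s.length) (hr : 2 ≤ r.length)
    (hLs : IsLyndon s) (hLr : IsLyndon r) :
    subst s (perSeq r) = perSeq (substWord s r) ∧
    subst s (perSeq (maxRot r)) = perSeq (substWord s (maxRot r)) :=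
  stmt11_general s r hs hr hLr
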